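/- arXiv:2310.15265 — 3 statements merged into one kernel-verified Lean document; each statement's English description precedes it below -/
import Mathlib

section
/- Let (α_e)_{e∈E} be a probability vector on a finite set E and let f : E → J be a map to a finite set J, with α_j := ∑_{e : f(e)=j} α_e for j ∈ J. Suppose (j_m)_{m≥1} ∈ J^ℕ is a sequence in which every j ∈ J occurs with asymptotic frequency α_j. Then there exists a sequence ω ∈ E^ℕ with f(ω_m) = j_m for all m and such that every e ∈ E occurs in ω with asymptotic frequency α_e. -/
open Finset Filter

section Stmt1Aux

variable {F : Type*} [Fintype F] [DecidableEq F] [Nonempty F]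

/-- Greedy selector: pick an element maximizing its deficiency at the next step. -/
noncomputable def greedySel (p : F → ℝ) (c : F → ℕ) (k : ℕ) : F :=
  (Finset.exists_max_image Finset.univ (fun e => (k + 1 : ℝ) * p e - c e)
    Finset.univ_nonempty).choose

lemma greedySel_spec (p : F → ℝ) (c : F → ℕ) (k : ℕ) (e : F) :
    (k + 1 : ℝ) * p e - c e ≤ (k + 1 : ℝ) * p (greedySel p c k) - c (greedySel p c k) :=
  (Finset.exists_max_image Finset.univ (fun e => (k + 1 : ℝ) * p e - c e)
    Finset.univ_nonempty).choose_spec.2 e (Finset.mem_univ e)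

/-- Counts of each symbol produced by the greedy sequence. -/
noncomputable def greedyCounts (p : F → ℝ) : ℕ → F → ℕ
  | 0 => fun _ => 0
  | k + 1 => fun e => greedyCounts p k e + if greedySel p (greedyCounts p k) k = e then 1 else 0

/-- The greedy sequence itself. -/
noncomputable def greedySeq (p : F → ℝ) (k : ℕ) : F := greedySel p (greedyCounts p k) k

lemma greedyCounts_succ (p : F → ℝ) (k : ℕ) (e : F) :
    greedyCounts p (k + 1) e = greedyCounts p k e + if greedySeq p k = e then 1 else 0 := rfl

lemma sum_greedyCounts (p : F → ℝ) (k : ℕ) : ∑ e, greedyCounts p k e = k := by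
  induction k with
  | zero => simp [greedyCounts]
  | succ k ih =>
    simp only [greedyCounts_succ, Finset.sum_add_distrib, ih, Finset.sum_ite_eq,
      Finset.mem_univ, if_true]

lemma greedyCounts_eq_card (p : F → ℝ) (k : ℕ) (e : F) :
    greedyCounts p k e = ((Finset.range k).filter (fun i => greedySeq p i = e)).card := by
  induction k with
  | zero => simp [greedyCounts]
  | succ k ih =>
    rw [Finset.range_add_one, Finset.filter_insert]
    by_cases h : greedySeq p k = e
    · rw [if_pos h, Finset.card_insert_of_notMem (by simp)]
      simp [greedyCounts_succ, ih, h]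
    · rw [if_neg h]
      simp [greedyCounts_succ, ih, h]

lemma greedy_max_pos (p : F → ℝ) (hp1 : ∑ e, p e = 1) (k : ℕ) :
    0 < (k + 1 : ℝ) * p (greedySeq p k) - greedyCounts p k (greedySeq p k) := by
  have hsum : ∑ e, ((k + 1 : ℝ) * p e - greedyCounts p k e) = 1 := by
    rw [Finset.sum_sub_distrib, ← Finset.mul_sum, hp1]
    have h : ∑ e, (greedyCounts p k e : ℝ) = k := by
      rw [← Nat.cast_sum, sum_greedyCounts]
    rw [h]; ring
  have hle : (1 : ℝ) ≤ (Fintype.card F : ℝ) *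
      ((k + 1 : ℝ) * p (greedySeq p k) - greedyCounts p k (greedySeq p k)) := by
    calc (1 : ℝ) = ∑ e, ((k + 1 : ℝ) * p e - greedyCounts p k e) := hsum.symm
      _ ≤ ∑ _e : F, ((k + 1 : ℝ) * p (greedySeq p k) - greedyCounts p k (greedySeq p k)) :=
          Finset.sum_le_sum fun e _ => greedySel_spec p (greedyCounts p k) k e
      _ = (Fintype.card F : ℝ) * _ := by
          rw [Finset.sum_const, Finset.card_univ, nsmul_eq_mul]
  have hc : (0 : ℝ) < Fintype.card F := by
    exact_mod_cast (Fintype.card_pos : 0 < Fintype.card F)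
  nlinarith

lemma greedySeq_pos (p : F → ℝ) (hp1 : ∑ e, p e = 1) (k : ℕ) :
    0 < p (greedySeq p k) := by
  have h := greedy_max_pos p hp1 k
  have h2 : (0 : ℝ) ≤ greedyCounts p k (greedySeq p k) := Nat.cast_nonneg _
  have h3 : (0 : ℝ) < (k : ℝ) + 1 := by positivity
  nlinarith

lemma greedyCounts_lb (p : F → ℝ) (hp0 : ∀ e, 0 ≤ p e) (hp1 : ∑ e, p e = 1) (k : ℕ) :
    ∀ e, (-1 : ℝ) < k * p e - greedyCounts p k e := by
  induction k with
  | zero => intro e; simp [greedyCounts]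
  | succ k ih =>
    intro e
    by_cases he : greedySeq p k = e
    · subst he
      have h := greedy_max_pos p hp1 k
      rw [greedyCounts_succ, if_pos rfl]
      push_cast
      linarith
    · rw [greedyCounts_succ, if_neg he]
      have h1 := ih e
      have h2 := hp0 e
      push_cast
      linarith

lemma greedyCounts_ub (p : F → ℝ) (hp0 : ∀ e, 0 ≤ p e) (hp1 : ∑ e, p e = 1) (k : ℕ) (e : F) :
    (k : ℝ) * p e - greedyCounts p k e < Fintype.card F := by
  have hzero : ∑ e', ((k : ℝ) * p e' - greedyCounts p k e') = 0 := by
    rw [Finset.sum_sub_distrib, ← Finset.mul_sum, hp1]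
    have h : ∑ e', (greedyCounts p k e' : ℝ) = k := by
      rw [← Nat.cast_sum, sum_greedyCounts]
    rw [h]; ring
  have hsplit : ((k : ℝ) * p e - greedyCounts p k e) +
      ∑ e' ∈ Finset.univ.erase e, ((k : ℝ) * p e' - greedyCounts p k e') = 0 := by
    rw [Finset.add_sum_erase Finset.univ
      (fun e' => (k : ℝ) * p e' - (greedyCounts p k e' : ℝ)) (Finset.mem_univ e)]
    exact hzero
  have h1 : ∑ e' ∈ Finset.univ.erase e, (-1 : ℝ) ≤
      ∑ e' ∈ Finset.univ.erase e, ((k : ℝ) * p e' - greedyCounts p k e') :=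
    Finset.sum_le_sum fun e' _ => (greedyCounts_lb p hp0 hp1 k e').le
  have hcard : 1 ≤ Fintype.card F := Fintype.card_pos
  have h2 : ((Finset.univ.erase e).card : ℝ) = (Fintype.card F : ℝ) - 1 := by
    rw [Finset.card_erase_of_mem (Finset.mem_univ e), Finset.card_univ]
    push_cast [Nat.cast_sub hcard]
    ring
  rw [Finset.sum_const, nsmul_eq_mul, h2] at h1
  linarith

lemma greedyCounts_bound (p : F → ℝ) (hp0 : ∀ e, 0 ≤ p e) (hp1 : ∑ e, p e = 1) (k : ℕ) (e : F) :
    |(greedyCounts p k e : ℝ) - k * p e| ≤ Fintype.card F := by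
  have h1 := greedyCounts_lb p hp0 hp1 k e
  have h2 := greedyCounts_ub p hp0 hp1 k e
  have hcard : (1 : ℝ) ≤ Fintype.card F := by exact_mod_cast Fintype.card_pos
  rw [abs_le]
  constructor <;> linarith

end Stmt1Aux

/-- Given a probability vector `α` on a finite set `E`, a surjection `f : E → J`,
and a sequence `j` in `J` in which every symbol `jj ∈ J` occurs with asymptotic
frequency `∑_{e ∈ f⁻¹ jj} α e`, there exists a lift `ω ∈ E^ℕ` of `j` (i.e.
`f (ω m) = j m` for all `m`) in which every `e ∈ E` occurs with frequency `α e`. -/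
theorem stmt1 {E J : Type*} [Fintype E] [Fintype J] [DecidableEq E] [DecidableEq J]
    (f : E → J) (hf : Function.Surjective f)
    (α : E → ℝ) (h0 : ∀ e, 0 ≤ α e) (h1 : ∑ e, α e = 1)
    (j : ℕ → J)
    (hj : ∀ jj : J,
      Filter.Tendsto
        (fun n : ℕ => (((Finset.range n).filter (fun i => j i = jj)).card : ℝ) / n)
        Filter.atTop (nhds (∑ e ∈ Finset.univ.filter (fun e => f e = jj), α e))) :
    ∃ ω : ℕ → E, (∀ m, f (ω m) = j m) ∧ ∀ e : E,
      Filter.Tendsto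
        (fun n : ℕ => (((Finset.range n).filter (fun i => ω i = e)).card : ℝ) / n)
        Filter.atTop (nhds (α e)) := by
  haveI : Nonempty E := ⟨(hf (j 0)).choose⟩
  -- fiber sums
  set S : J → ℝ := fun jj => ∑ e ∈ Finset.univ.filter (fun e => f e = jj), α e with hSdef
  have hS0 : ∀ jj, 0 ≤ S jj := fun jj => Finset.sum_nonneg fun e _ => h0 e
  -- per-fiber probability vectors on E
  set p : J → E → ℝ := fun jj e =>
    if f e = jj then
      (if S jj = 0 then ((Finset.univ.filter (fun e' => f e' = jj)).card : ℝ)⁻¹ else α e / S jj)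
    else 0 with hpdef
  have hp0 : ∀ jj e, 0 ≤ p jj e := by
    intro jj e
    simp only [hpdef]
    split_ifs with h1' h2'
    · positivity
    · exact div_nonneg (h0 e) (hS0 jj)
    · exact le_refl 0
  have hfibne : ∀ jj : J, (Finset.univ.filter (fun e' => f e' = jj)).Nonempty := by
    intro jj
    obtain ⟨e, he⟩ := hf jj
    exact ⟨e, by simp [he]⟩
  have hp1 : ∀ jj, ∑ e, p jj e = 1 := by
    intro jj
    simp only [hpdef]
    rw [← Finset.sum_filter]
    by_cases hz : S jj = 0
    · simp only [if_pos hz, Finset.sum_const, nsmul_eq_mul]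
      rw [mul_inv_cancel₀]
      exact_mod_cast (Finset.card_pos.mpr (hfibne jj)).ne'
    · simp only [if_neg hz]
      rw [← Finset.sum_div]
      exact div_self hz
  -- occurrence counts of symbols of J
  set N : J → ℕ → ℕ := fun jj n => ((Finset.range n).filter (fun i => j i = jj)).card with hNdef
  have hNsucc : ∀ jj n, N jj (n + 1) = N jj n + if j n = jj then 1 else 0 := by
    intro jj n
    simp only [hNdef, Finset.range_add_one, Finset.filter_insert]
    by_cases h : j n = jj
    · rw [if_pos h, if_pos h, Finset.card_insert_of_notMem (by simp)]
    · rw [if_neg h, if_neg h, add_zero]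
  -- the lifted sequence
  set ω : ℕ → E := fun m => greedySeq (p (j m)) (N (j m) m) with hωdef
  have hω1 : ∀ m, f (ω m) = j m := by
    intro m
    by_contra h
    have hpos := greedySeq_pos (p (j m)) (hp1 (j m)) (N (j m) m)
    rw [hωdef] at h
    simp only [hpdef] at hpos h
    rw [if_neg h] at hpos
    exact lt_irrefl _ hpos
  refine ⟨ω, hω1, ?_⟩
  -- counting identity
  have hcount : ∀ (e : E) (n : ℕ),
      ((Finset.range n).filter (fun i => ω i = e)).card
        = greedyCounts (p (f e)) (N (f e) n) e := by
    intro e n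
    induction n with
    | zero => simp [hNdef, greedyCounts]
    | succ n ih =>
      rw [Finset.range_add_one, Finset.filter_insert, hNsucc]
      by_cases h : j n = f e
      · rw [if_pos h, greedyCounts_succ]
        have hωn : ω n = greedySeq (p (f e)) (N (f e) n) := by
          rw [hωdef]; simp only; rw [h]
        by_cases h2 : ω n = e
        · rw [if_pos h2, Finset.card_insert_of_notMem (by simp), ih,
            if_pos (by rw [← hωn, h2])]
        · rw [if_neg h2, ih, if_neg (by rw [← hωn]; exact fun hc => h2 hc), add_zero]
      · have h2 : ω n ≠ e := fun hc => h (by rw [← hω1 n, hc])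
        rw [if_neg h2, if_neg h, add_zero, ih]
  intro e
  have hje := hj (f e)
  by_cases hz : S (f e) = 0
  · -- α e = 0; squeeze between 0 and N/n → 0
    have hα : α e = 0 := by
      have hmem : e ∈ Finset.univ.filter (fun e' => f e' = f e) := by simp
      have := (Finset.sum_eq_zero_iff_of_nonneg fun x _ => h0 x).mp hz e hmem
      exact this
    rw [hα]
    have hje0 : Filter.Tendsto (fun n : ℕ => ((N (f e) n : ℝ)) / n) Filter.atTop (nhds 0) := by
      rw [← hz]
      exact hje
    refine tendsto_of_tendsto_of_tendsto_of_le_of_le tendsto_const_nhds hje0 ?_ ?_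
    · intro n; positivity
    · intro n
      have hsub : ((Finset.range n).filter (fun i => ω i = e)).card ≤ N (f e) n := by
        apply Finset.card_le_card
        intro i hi
        simp only [Finset.mem_filter, Finset.mem_range] at hi ⊢
        exact ⟨hi.1, by rw [← hω1 i, hi.2]⟩
      have hsub' : ((((Finset.range n).filter (fun i => ω i = e)).card : ℝ)) ≤ (N (f e) n : ℝ) := by
        exact_mod_cast hsub
      simpa [div_eq_mul_inv] using
        mul_le_mul_of_nonneg_right hsub' (by positivity : (0 : ℝ) ≤ ((n : ℝ))⁻¹)
  · -- main case : S (f e) > 0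
    have hpe : p (f e) e = α e / S (f e) := by
      simp only [hpdef, if_pos rfl, if_neg hz]
    have key : ∀ n : ℕ,
        (((Finset.range n).filter (fun i => ω i = e)).card : ℝ) / n
          = ((greedyCounts (p (f e)) (N (f e) n) e : ℝ) - (N (f e) n) * p (f e) e) / n
            + p (f e) e * ((N (f e) n : ℝ) / n) := by
      intro n
      rw [hcount e n, mul_div_assoc' (p (f e) e), ← add_div]
      congr 1
      ring
    have lim1 : Filter.Tendsto
        (fun n : ℕ => ((greedyCounts (p (f e)) (N (f e) n) e : ℝ) - (N (f e) n) * p (f e) e) / n)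
        Filter.atTop (nhds 0) := by
      refine squeeze_zero_norm ?_
        (tendsto_const_div_atTop_nhds_zero_nat (Fintype.card E : ℝ))
      intro n
      rw [norm_div, Real.norm_natCast]
      have hb : ‖(greedyCounts (p (f e)) (N (f e) n) e : ℝ) - (N (f e) n) * p (f e) e‖
          ≤ (Fintype.card E : ℝ) := by
        rw [Real.norm_eq_abs]
        exact greedyCounts_bound (p (f e)) (hp0 (f e)) (hp1 (f e)) (N (f e) n) e
      simpa [div_eq_mul_inv] using
        mul_le_mul_of_nonneg_right hb (by positivity : (0 : ℝ) ≤ ((n : ℝ))⁻¹)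
    have lim2 : Filter.Tendsto
        (fun n : ℕ => p (f e) e * ((N (f e) n : ℝ) / n))
        Filter.atTop (nhds (p (f e) e * S (f e))) :=
      hje.const_mul _
    have hval : p (f e) e * S (f e) = α e := by
      rw [hpe, div_mul_cancel₀ _ hz]
    have := lim1.add lim2
    rw [zero_add, hval] at this
    exact this.congr fun n => (key n).symm
end

section
/- Let (a_m)_{m≥1} ∈ {0,…,B−1}^ℕ and let h_k be GLS maps as above. Setting s_m = ε_{a_m}, K_m = 1/(r_{a_m+1} − r_{a_m}), and t_m = r_{a_m} + ε_{a_m}, the limit x = lim_{m→∞} h_{a_1} ∘ ⋯ ∘ h_{a_m}(0) satisfies x = ∑_{m≥1} (−1)^{∑_{i=1}^{m−1} s_i} · t_m / ∏_{i=1}^{m−1} K_i (with empty sum 0 and empty product 1). -/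
/-!
Each `h k` is the affine map `y ↦ t_k + σ_k d_k y` with `σ_k = (-1)^(ε k)` and
`d_k = r (k+1) - r k`, so `h (a 0) ∘ ⋯ ∘ h (a (n-1))` applied to `0` is exactly the `n`-th partial
sum of the series. Because `B ≥ 2`, every gap `d_k` is at most some `c < 1`, and the terms are
bounded by `2 c^m`; the series is therefore absolutely summable and its sum is the limit `x`.
-/

open Finset Filter Topology

theorem foldr_ofFn_affine {R : Type*} [CommSemiring R] (u v : ℕ → R) (n : ℕ) (y : R) :
    (List.ofFn fun i : Fin n => fun z => v i + u i * z).foldr (fun f z => f z) y =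
      ∑ m ∈ range n, (∏ i ∈ range m, u i) * v m + (∏ i ∈ range n, u i) * y := by
  induction n generalizing y with
  | zero => simp
  | succ n ih =>
    rw [List.ofFn_succ', List.concat_eq_append, List.foldr_concat]
    simp only [Fin.val_castSucc, Fin.val_last]
    rw [ih, sum_range_succ, prod_range_succ]
    ring

theorem summable_prod_range_mul {R : Type*} [NormedCommRing R] [NormOneClass R] [CompleteSpace R]
    {u v : ℕ → R} {c C : ℝ} (hu : ∀ i, ‖u i‖ ≤ c) (hc : c < 1) (hv : ∀ m, ‖v m‖ ≤ C) :
    Summable fun m => (∏ i ∈ range m, u i) * v m := by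
  have hc0 : 0 ≤ c := (norm_nonneg _).trans (hu 0)
  refine ((summable_geometric_of_lt_one hc0 hc).mul_right C).of_norm_bounded fun m => ?_
  calc ‖(∏ i ∈ range m, u i) * v m‖
      ≤ (∏ i ∈ range m, ‖u i‖) * ‖v m‖ :=
        (norm_mul_le _ _).trans (mul_le_mul_of_nonneg_right (norm_prod_le _ _) (norm_nonneg _))
    _ ≤ (∏ _i ∈ range m, c) * C := by
        gcongr with i
        · exact hu i
        · exact hv m
    _ = c ^ m * C := by rw [prod_const, card_range]

section Partition

variable {B : ℕ} {r : ℕ → ℝ}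

theorem partition_strictMonoOn (hmono : ∀ k < B, r k < r (k + 1)) : StrictMonoOn r (Set.Iic B) :=
  strictMonoOn_Iic_of_lt_succ fun m hm => by simpa using hmono m hm

theorem partition_mem_Icc (hr0 : r 0 = 0) (hrB : r B = 1) (hmono : ∀ k < B, r k < r (k + 1))
    {k : ℕ} (hk : k ≤ B) : r k ∈ Set.Icc (0 : ℝ) 1 := by
  have hr := (partition_strictMonoOn hmono).monotoneOn
  rw [← hr0, ← hrB]
  exact ⟨hr (Nat.zero_le B) hk (Nat.zero_le k), hr hk Set.self_mem_Iic hk⟩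

theorem partition_step_lt_one (hr0 : r 0 = 0) (hrB : r B = 1) (hmono : ∀ k < B, r k < r (k + 1))
    (hB : 2 ≤ B) {k : ℕ} (hk : k < B) : r (k + 1) - r k < 1 := by
  have hr := partition_strictMonoOn hmono
  have hr' := hr.monotoneOn
  rcases Nat.eq_zero_or_pos k with rfl | hpos
  · have h12 : r 1 < r 2 := hr (Set.mem_Iic.2 (by omega)) (Set.mem_Iic.2 hB) one_lt_two
    have h2B : r 2 ≤ r B := hr' (Set.mem_Iic.2 hB) Set.self_mem_Iic hB
    linarith
  · have h0k : r 0 < r k := hr (Nat.zero_le B) hk.le hpos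
    have hkB : r (k + 1) ≤ r B :=
      hr' (Nat.succ_le_of_lt hk) Set.self_mem_Iic (Nat.succ_le_of_lt hk)
    linarith

theorem exists_partition_step_le_lt_one (hr0 : r 0 = 0) (hrB : r B = 1)
    (hmono : ∀ k < B, r k < r (k + 1)) (hB : 2 ≤ B) :
    ∃ c < 1, ∀ k < B, r (k + 1) - r k ≤ c := by
  obtain ⟨k₀, hk₀, hmax⟩ :=
    (range B).exists_max_image (fun k => r (k + 1) - r k) ⟨0, mem_range.2 (by omega)⟩
  exact ⟨_, partition_step_lt_one hr0 hrB hmono hB (mem_range.1 hk₀),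
    fun k hk => hmax k (mem_range.2 hk)⟩

end Partition

/-- For a digit sequence `a` of a GLS IFS, with `s m = ε (a m)`,
`K m = (r (a m + 1) - r (a m))⁻¹` and `t m = r (a m) + ε (a m)`, the limit
`x = lim_m h (a 0) ∘ ⋯ ∘ h (a (m-1)) (0)` is the sum of the series
`∑_m (-1)^(s 0 + ⋯ + s (m-1)) * t m / (K 0 ⋯ K (m-1))`. -/
theorem stmt6 (B : ℕ) (hB : 2 ≤ B) (r : ℕ → ℝ)
    (hr0 : r 0 = 0) (hrB : r B = 1)
    (hmono : ∀ k < B, r k < r (k + 1))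
    (ε : ℕ → ℕ) (hε : ∀ k < B, ε k = 0 ∨ ε k = 1)
    (h : ℕ → ℝ → ℝ)
    (hh : ∀ k, h k = fun x => r k + ε k + (-1 : ℝ) ^ (ε k) * x * (r (k + 1) - r k))
    (a : ℕ → ℕ) (ha : ∀ m, a m < B) (x : ℝ)
    (hx : Filter.Tendsto
      (fun m : ℕ => (List.ofFn fun i : Fin m => h (a i)).foldr (fun f y => f y) 0)
      Filter.atTop (nhds x)) :
    HasSum
      (fun m : ℕ => (-1 : ℝ) ^ (∑ i ∈ Finset.range m, ε (a i)) *
        ((r (a m) + ε (a m)) / ∏ i ∈ Finset.range m, (r (a i + 1) - r (a i))⁻¹))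
      x := by
  set u : ℕ → ℝ := fun k => (-1) ^ ε k * (r (k + 1) - r k)
  set v : ℕ → ℝ := fun k => r k + ε k
  have h_affine : h = fun k z => v k + u k * z := by
    funext k z
    rw [hh]
    ring
  have h_term : (fun m : ℕ => (-1 : ℝ) ^ (∑ i ∈ range m, ε (a i)) *
      ((r (a m) + ε (a m)) / ∏ i ∈ range m, (r (a i + 1) - r (a i))⁻¹)) =
      fun m => (∏ i ∈ range m, u (a i)) * v (a m) := by
    funext m
    rw [prod_mul_distrib, prod_pow_eq_pow_sum, prod_inv_distrib, div_inv_eq_mul]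
    ring
  have h_partial (n : ℕ) :
      (List.ofFn fun i : Fin n => h (a i)).foldr (fun f y => f y) 0 =
        ∑ m ∈ range n, (∏ i ∈ range m, u (a i)) * v (a m) := by
    simpa [h_affine] using foldr_ofFn_affine (fun i => u (a i)) (fun i => v (a i)) n 0
  obtain ⟨c, hc, hstep⟩ := exists_partition_step_le_lt_one hr0 hrB hmono hB
  have hu (i : ℕ) : ‖u (a i)‖ ≤ c := by
    have hpos := sub_pos.2 (hmono _ (ha i))
    simpa [u, abs_of_pos hpos] using hstep _ (ha i)
  have hv (m : ℕ) : ‖v (a m)‖ ≤ 2 := by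
    have hr := partition_mem_Icc hr0 hrB hmono (ha m).le
    have hε1 : (ε (a m) : ℝ) ≤ 1 := by rcases hε _ (ha m) with hε0 | hε1 <;> simp [*]
    rw [Real.norm_of_nonneg (add_nonneg hr.1 (Nat.cast_nonneg _))]
    linarith [hr.2]
  rw [h_term, (summable_prod_range_mul hu hc hv).hasSum_iff_tendsto_nat]
  simpa only [h_partial] using hx
end

section
/- Let (p_j)_{0≤j<J} be a positive probability vector and define f_j(w) = p_j w + ∑_{i<j} p_i on ℝ. Then for any words j_1⋯j_n and j_1'⋯j_n' in {0,…,J−1}^n with f_{j_1}∘⋯∘f_{j_n} ≠ f_{j_1'}∘⋯∘f_{j_n'}, the distance between these affine maps satisfies dist(f_{j_1⋯j_n}, f_{j_1'⋯j_n'}) ≥ (min_j p_j)^n, where the distance of two affine maps x ↦ dx + δ and x ↦ d'x + δ' is |δ − δ'| if d = d' and ∞ otherwise. In particular the IFS {f_j} satisfies the Exponential Separation Condition. -/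
/-!
The maps `f j` cut `[0, 1]` into consecutive intervals `[∑_{i<j} p i, ∑_{i≤j} p i]`, so a
composition `f_w` of length `n` maps `[0, 1]` onto an interval of length `∏ p (w i) ≥ (min p)^n`,
and the images of distinct words of the same length are ordered along the line without overlap.
The left endpoints `f_w 0` of two such intervals are therefore at least the length of the left
one apart.
-/

open Finset

section WordMap

variable {ι α : Type*}

def wordMap (f : ι → α → α) (w : List ι) : α → α :=
  (w.map f).foldr (· ∘ ·) id

@[simp]
lemma wordMap_nil (f : ι → α → α) : wordMap f [] = id := rfl

@[simp]
lemma wordMap_cons (f : ι → α → α) (i : ι) (w : List ι) :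
    wordMap f (i :: w) = f i ∘ wordMap f w := rfl

lemma wordMap_ofFn (f : ι → α → α) {n : ℕ} (u : Fin n → ι) :
    wordMap f (List.ofFn u) = (List.ofFn fun k => f (u k)).foldr (· ∘ ·) id := by
  rw [wordMap, List.map_ofFn]
  rfl

section Preorder

variable [Preorder α] {f : ι → α → α}

lemma le_wordMap_self {a : α} (hf : ∀ i, Monotone (f i)) (ha : ∀ i, a ≤ f i a) (w : List ι) :
    a ≤ wordMap f w a := by
  induction w with
  | nil => exact le_rfl
  | cons i w ih => exact (ha i).trans (hf i ih)

lemma wordMap_self_le {b : α} (hf : ∀ i, Monotone (f i)) (hb : ∀ i, f i b ≤ b) (w : List ι) :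
    wordMap f w b ≤ b := by
  induction w with
  | nil => exact le_rfl
  | cons i w ih => exact (hf i ih).trans (hb i)

lemma wordMap_le_or_le_of_ne [LinearOrder ι] {a b : α} (hf : ∀ i, Monotone (f i))
    (ha : ∀ i, a ≤ f i a) (hb : ∀ i, f i b ≤ b) (hord : ∀ i j, i < j → f i b ≤ f j a) :
    ∀ {w w' : List ι}, w.length = w'.length → w ≠ w' →
      wordMap f w b ≤ wordMap f w' a ∨ wordMap f w' b ≤ wordMap f w a
  | [], [], _, hne => absurd rfl hne
  | i :: w, j :: w', hlen, hne => by
    have ordered_heads : ∀ {i j} (v v' : List ι), i < j →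
        wordMap f (i :: v) b ≤ wordMap f (j :: v') a := fun v v' hij =>
      (hf _ (wordMap_self_le hf hb v)).trans <|
        (hord _ _ hij).trans (hf _ (le_wordMap_self hf ha v'))
    rcases lt_trichotomy i j with hij | rfl | hji
    · exact .inl (ordered_heads w w' hij)
    · have htail : w ≠ w' := fun h => hne (h ▸ rfl)
      rcases wordMap_le_or_le_of_ne hf ha hb hord (Nat.succ.inj hlen) htail with h | h
      · exact .inl (hf i h)
      · exact .inr (hf i h)
    · exact .inr (ordered_heads w' w hji)

end Preorder

section Affine

variable {R : Type*} [Semiring R] {f : ι → R → R} {s : ι → R}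

lemma wordMap_apply_of_affine (hf : ∀ i x, f i x = s i * x + f i 0) (w : List ι) (x : R) :
    wordMap f w x = (w.map s).prod * x + wordMap f w 0 := by
  induction w with
  | nil => simp
  | cons i w ih =>
    simp only [wordMap_cons, Function.comp_apply, List.map_cons, List.prod_cons]
    rw [hf i, ih, hf i (wordMap f w 0)]
    noncomm_ring

end Affine

lemma pow_length_le_prod_map {R : Type*} [CommSemiring R] [PartialOrder R]
    [IsOrderedRing R] {s : ι → R} {m : R} (hm0 : 0 ≤ m) (hm : ∀ i, m ≤ s i) (w : List ι) :
    m ^ w.length ≤ (w.map s).prod := by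
  induction w with
  | nil => simp
  | cons i w ih =>
    rw [List.length_cons, pow_succ', List.map_cons, List.prod_cons]
    exact mul_le_mul (hm i) ih (pow_nonneg hm0 _) (hm0.trans (hm i))

lemma pow_length_le_abs_wordMap_sub [LinearOrder ι] {f : ι → ℝ → ℝ} {s : ι → ℝ} {m : ℝ}
    (hf : ∀ i x, f i x = s i * x + f i 0) (hs : ∀ i, 0 ≤ s i) (h0 : ∀ i, 0 ≤ f i 0)
    (h1 : ∀ i, f i 1 ≤ 1) (hord : ∀ i j, i < j → f i 1 ≤ f j 0) (hm0 : 0 ≤ m)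
    (hm : ∀ i, m ≤ s i) {w w' : List ι} (hlen : w.length = w'.length) (hne : w ≠ w') :
    m ^ w.length ≤ |wordMap f w 0 - wordMap f w' 0| := by
  have hmono : ∀ i, Monotone (f i) := fun i x y hxy => by
    rw [hf i x, hf i y]
    gcongr
    exact hs i
  rcases wordMap_le_or_le_of_ne hmono h0 h1 hord hlen hne with h | h
  · rw [wordMap_apply_of_affine hf, mul_one] at h
    exact le_abs.2 (.inr (by linarith [pow_length_le_prod_map hm0 hm w]))
  · rw [wordMap_apply_of_affine hf, mul_one] at h
    exact le_abs.2 (.inl (by linarith [hlen ▸ pow_length_le_prod_map hm0 hm w']))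

end WordMap

section CumulativeSums

variable {ι : Type*} [Fintype ι] [LinearOrder ι] [LocallyFiniteOrderBot ι] {p : ι → ℝ}

lemma sum_filter_lt_add_eq_sum_Iic (j : ι) :
    ∑ i ∈ univ.filter (· < j), p i + p j = ∑ i ∈ Iic j, p i := by
  rw [filter_gt_eq_Iio, ← Iio_insert, sum_insert (by simp), add_comm]

lemma sum_filter_lt_add_le_sum_filter_lt (hp : ∀ i, 0 ≤ p i) {i j : ι} (hij : i < j) :
    ∑ k ∈ univ.filter (· < i), p k + p i ≤ ∑ k ∈ univ.filter (· < j), p k := by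
  rw [sum_filter_lt_add_eq_sum_Iic, filter_gt_eq_Iio]
  exact sum_le_sum_of_subset_of_nonneg (fun k hk => mem_Iio.2 ((mem_Iic.1 hk).trans_lt hij)) fun k _ _ => hp k

lemma sum_filter_lt_add_le_sum (hp : ∀ i, 0 ≤ p i) (j : ι) :
    ∑ i ∈ univ.filter (· < j), p i + p j ≤ ∑ i, p i := by
  rw [sum_filter_lt_add_eq_sum_Iic]
  exact sum_le_sum_of_subset_of_nonneg (subset_univ _) fun k _ _ => hp k

end CumulativeSums

/-- For the driving IFS `f j w = p j * w + ∑_{i < j} p i` of a positive probability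
vector `p`, any two distinct compositions of length `n` with equal slopes have
intercepts at distance at least `(min_j p j)^n`; in particular the IFS satisfies the
Exponential Separation Condition with `c = min_j p j`. -/
theorem stmt8 (J : ℕ) (hJ : 2 ≤ J) (p : Fin J → ℝ) (hp : ∀ j, 0 < p j)
    (hsum : ∑ j, p j = 1)
    (f : Fin J → ℝ → ℝ)
    (hf : ∀ j, f j = fun w => p j * w + ∑ i ∈ Finset.univ.filter (· < j), p i) :
    ∀ n : ℕ, ∀ u u' : Fin n → Fin J,
      ((List.ofFn fun i => f (u i)).foldr (· ∘ ·) id) ≠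
        ((List.ofFn fun i => f (u' i)).foldr (· ∘ ·) id) →
      (∏ i, p (u i)) = (∏ i, p (u' i)) →
      (Finset.univ.inf' ⟨⟨0, by omega⟩, Finset.mem_univ _⟩ p) ^ n ≤
        |((List.ofFn fun i => f (u i)).foldr (· ∘ ·) id) 0 -
          ((List.ofFn fun i => f (u' i)).foldr (· ∘ ·) id) 0| := by
  intro n u u' hne _
  set m := univ.inf' ⟨⟨0, by omega⟩, mem_univ _⟩ p
  have hp0 : ∀ j, 0 ≤ p j := fun j => (hp j).le
  have hm : ∀ j, m ≤ p j := fun j => inf'_le p (mem_univ j)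
  have hm0 : 0 ≤ m := le_inf' _ _ fun j _ => hp0 j
  have haffine : ∀ j x, f j x = p j * x + f j 0 := by simp [hf]
  have hf0 : ∀ j, 0 ≤ f j 0 := by simp [hf, sum_nonneg, hp0]
  have hf1 : ∀ j, f j 1 ≤ 1 := fun j => by
    simpa [hf, hsum, add_comm] using sum_filter_lt_add_le_sum hp0 j
  have hord : ∀ i j, i < j → f i 1 ≤ f j 0 := fun i j hij => by
    simpa [hf, add_comm] using sum_filter_lt_add_le_sum_filter_lt hp0 hij
  simp only [← wordMap_ofFn] at hne ⊢
  have hwords : List.ofFn u ≠ List.ofFn u' := fun h => hne (h ▸ rfl)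
  simpa using pow_length_le_abs_wordMap_sub haffine hp0 hf0 hf1 hord hm0 hm (by simp) hwords
end
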